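/- Let f, g be analytic on the unit disk with f(0)=g(0)=0, f'(0)=g'(0)=1, |f(z)/g(z) − 1| < 1 and Re(g(z)/z) > 0 on the unit disk. Then for |z| = r < 1, |z f'(z)/f(z) − 1| ≤ r(3 + r)/(1 − r²). -/

import Mathlib

/-!
Write `g z = z P z` and `f z = z P z q z`: then `Re P > 0`, and `q = f / g` maps the disc into
`ball 1 1` with `q 0 = 1`, so `z f'/f - 1 = z P'/P + z q'/q`. The Schwarz–Pick lemma applied to
the Cayley transform `(P - 1)/(P + 1)` gives `|P'| (1 - r²) ≤ 2 Re P ≤ 2 |P|`; applied to `q - 1`,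
together with the Schwarz bound `|q - 1| ≤ r`, it gives `|z q'/q| ≤ r (1 + r)/(1 - r²) = r/(1 - r)`.
The two bounds add up to `r (3 + r)/(1 - r²)`.
-/

open Metric Complex Set ComplexConjugate Topology

noncomputable def mobius (c : ℂ) (x : ℂ) : ℂ := (x - c) / (1 - conj c * x)

namespace mobius

lemma one_sub_conj_mul_ne_zero {c x : ℂ} (hc : ‖c‖ < 1) (hx : ‖x‖ < 1) :
    1 - conj c * x ≠ 0 := by
  intro h
  have hlt : ‖conj c * x‖ < 1 := by
    rw [norm_mul, RCLike.norm_conj]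
    exact mul_lt_one_of_nonneg_of_lt_one_left (norm_nonneg c) hc hx.le
  simp [show conj c * x = 1 by linear_combination -h] at hlt

lemma one_sub_conj_mul_self (a : ℂ) : 1 - conj a * a = ((1 - ‖a‖ ^ 2 : ℝ) : ℂ) := by
  rw [← normSq_eq_conj_mul_self, ← Complex.sq_norm]; push_cast; ring

lemma normSq_denom_sub_normSq_num (c x : ℂ) :
    normSq (1 - conj c * x) - normSq (x - c) = (1 - normSq c) * (1 - normSq x) := by
  simp only [normSq_apply, sub_re, sub_im, mul_re, mul_im, one_re, one_im, conj_re, conj_im]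
  ring

lemma norm_lt_one {c x : ℂ} (hc : ‖c‖ < 1) (hx : ‖x‖ < 1) : ‖mobius c x‖ < 1 := by
  rw [mobius, norm_div, div_lt_one (norm_pos_iff.mpr (one_sub_conj_mul_ne_zero hc hx)),
    ← sq_lt_sq₀ (norm_nonneg _) (norm_nonneg _), Complex.sq_norm, Complex.sq_norm,
    ← sub_pos, normSq_denom_sub_normSq_num, ← Complex.sq_norm, ← Complex.sq_norm]
  have := norm_nonneg c; have := norm_nonneg x
  exact mul_pos (by nlinarith) (by nlinarith)

lemma mapsTo_ball {c : ℂ} (hc : ‖c‖ < 1) : MapsTo (mobius c) (ball 0 1) (ball 0 1) :=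
  fun _ hx => mem_ball_zero_iff.mpr (norm_lt_one hc (mem_ball_zero_iff.mp hx))

lemma hasDerivAt {c x : ℂ} (h : 1 - conj c * x ≠ 0) :
    HasDerivAt (mobius c) ((1 - conj c * c) / (1 - conj c * x) ^ 2) x := by
  have hnum : HasDerivAt (fun y => y - c) 1 x := (hasDerivAt_id x).sub_const c
  have hden : HasDerivAt (fun y => 1 - conj c * y) (-conj c) x := by
    simpa using ((hasDerivAt_id x).const_mul (conj c)).const_sub 1
  exact (hnum.div hden h).congr_deriv (by ring)

lemma differentiableOn {c : ℂ} (hc : ‖c‖ < 1) : DifferentiableOn ℂ (mobius c) (ball 0 1) :=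
  fun _ hx => (hasDerivAt (one_sub_conj_mul_ne_zero hc (mem_ball_zero_iff.mp hx)))
    |>.differentiableAt.differentiableWithinAt

lemma neg_apply_zero (a : ℂ) : mobius (-a) 0 = a := by simp [mobius]

lemma apply_self (b : ℂ) : mobius b b = 0 := by simp [mobius]

lemma hasDerivAt_neg_zero (a : ℂ) : HasDerivAt (mobius (-a)) ((1 - ‖a‖ ^ 2 : ℝ) : ℂ) 0 := by
  simpa [one_sub_conj_mul_self] using hasDerivAt (c := -a) (x := 0) (by simp)

lemma hasDerivAt_self {b : ℂ} (hb : ‖b‖ < 1) :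
    HasDerivAt (mobius b) ((1 - ‖b‖ ^ 2 : ℝ) : ℂ)⁻¹ b := by
  have h := one_sub_conj_mul_ne_zero hb hb
  convert hasDerivAt h using 1
  rw [← one_sub_conj_mul_self, sq, div_mul_cancel_left₀ h]

end mobius

/-- Schwarz–Pick lemma: the Schwarz lemma applied to `mobius (ω a) ∘ ω ∘ mobius (-a)`. -/
theorem norm_deriv_mul_le_of_mapsTo_ball {ω : ℂ → ℂ} (hd : DifferentiableOn ℂ ω (ball 0 1))
    (hm : MapsTo ω (ball 0 1) (ball 0 1)) {a : ℂ} (ha : a ∈ ball 0 1) :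
    ‖deriv ω a‖ * (1 - ‖a‖ ^ 2) ≤ 1 - ‖ω a‖ ^ 2 := by
  have ha1 : ‖a‖ < 1 := mem_ball_zero_iff.mp ha
  have hb1 : ‖ω a‖ < 1 := mem_ball_zero_iff.mp (hm ha)
  have hna : ‖-a‖ < 1 := by rwa [norm_neg]
  set F := mobius (ω a) ∘ ω ∘ mobius (-a)
  have hF : DifferentiableOn ℂ F (ball 0 1) :=
    (mobius.differentiableOn hb1).comp (hd.comp (mobius.differentiableOn hna)
      (mobius.mapsTo_ball hna)) (hm.comp (mobius.mapsTo_ball hna))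
  have hFm : MapsTo F (ball 0 1) (closedBall (F 0) 1) := by
    have : F 0 = 0 := by simp [F, mobius.neg_apply_zero, mobius.apply_self]
    rw [this]
    exact ((mobius.mapsTo_ball hb1).comp (hm.comp (mobius.mapsTo_ball hna))).mono_right
      ball_subset_closedBall
  have hF' : HasDerivAt F
      (((1 - ‖ω a‖ ^ 2 : ℝ) : ℂ)⁻¹ * (deriv ω a * ((1 - ‖a‖ ^ 2 : ℝ) : ℂ))) 0 := by
    have hω : HasDerivAt ω (deriv ω a) (mobius (-a) 0) := by
      rw [mobius.neg_apply_zero]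
      exact (hd.differentiableAt (isOpen_ball.mem_nhds ha)).hasDerivAt
    have hψ : HasDerivAt (mobius (ω a)) ((1 - ‖ω a‖ ^ 2 : ℝ) : ℂ)⁻¹ ((ω ∘ mobius (-a)) 0) := by
      rw [Function.comp_apply, mobius.neg_apply_zero]
      exact mobius.hasDerivAt_self hb1
    exact hψ.comp 0 (hω.comp 0 (mobius.hasDerivAt_neg_zero a))
  have hschwarz := Complex.norm_deriv_le_one_of_mapsTo_ball hF hFm one_pos
  have hb2 : 0 < 1 - ‖ω a‖ ^ 2 := by nlinarith [norm_nonneg (ω a)]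
  have ha2 : 0 < 1 - ‖a‖ ^ 2 := by nlinarith [norm_nonneg a]
  rw [hF'.deriv, norm_mul, norm_mul, norm_inv, norm_real, norm_real, Real.norm_of_nonneg hb2.le,
    Real.norm_of_nonneg ha2.le, inv_mul_le_iff₀ hb2, mul_one] at hschwarz
  exact hschwarz

lemma one_sub_norm_sq_cayley {w : ℂ} (hw : w + 1 ≠ 0) :
    1 - ‖(w - 1) / (w + 1)‖ ^ 2 = 4 * w.re / ‖w + 1‖ ^ 2 := by
  have h : normSq (w + 1) ≠ 0 := normSq_eq_zero.not.mpr hw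
  rw [norm_div, div_pow, Complex.sq_norm, Complex.sq_norm]
  field_simp
  simp only [normSq_apply, add_re, add_im, sub_re, sub_im, one_re, one_im]
  ring

lemma add_one_ne_zero_of_re_pos {w : ℂ} (hw : 0 < w.re) : w + 1 ≠ 0 := by
  intro h
  have := congrArg re h
  simp only [add_re, one_re, zero_re] at this
  linarith

/-- Carathéodory's derivative bound, via Schwarz–Pick for the Cayley transform `(P - 1)/(P + 1)`. -/
theorem norm_deriv_mul_le_of_re_pos {P : ℂ → ℂ} (hP : DifferentiableOn ℂ P (ball 0 1))
    (hre : ∀ w ∈ ball (0 : ℂ) 1, 0 < (P w).re) {z : ℂ} (hz : z ∈ ball 0 1) :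
    ‖deriv P z‖ * (1 - ‖z‖ ^ 2) ≤ 2 * (P z).re := by
  have hne : ∀ w ∈ ball (0 : ℂ) 1, P w + 1 ≠ 0 := fun w hw => add_one_ne_zero_of_re_pos (hre w hw)
  set W : ℂ → ℂ := fun w => (P w - 1) / (P w + 1)
  have hW : DifferentiableOn ℂ W (ball 0 1) := (hP.sub_const 1).div (hP.add_const 1) hne
  have hWm : MapsTo W (ball 0 1) (ball 0 1) := by
    intro w hw
    have h := one_sub_norm_sq_cayley (hne w hw)
    have : 0 < 4 * (P w).re / ‖P w + 1‖ ^ 2 := by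
      have := hre w hw; have := norm_pos_iff.mpr (hne w hw); positivity
    rw [mem_ball_zero_iff, ← sq_lt_one_iff₀ (norm_nonneg _)]
    linarith
  have hW' : deriv W z = 2 * deriv P z / (P z + 1) ^ 2 := by
    have hPz := (hP.differentiableAt (isOpen_ball.mem_nhds hz)).hasDerivAt
    exact ((hPz.sub_const 1).div (hPz.add_const 1) (hne z hz)).deriv.trans (by ring)
  have hpick := norm_deriv_mul_le_of_mapsTo_ball hW hWm hz
  have hs : 0 < ‖P z + 1‖ ^ 2 := by have := norm_pos_iff.mpr (hne z hz); positivity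
  rw [hW', one_sub_norm_sq_cayley (hne z hz), norm_div, norm_mul, norm_pow, Complex.norm_ofNat,
    div_mul_eq_mul_div, div_le_div_iff_of_pos_right hs] at hpick
  linarith

theorem norm_mul_logDeriv_le_of_re_pos {P : ℂ → ℂ} (hP : DifferentiableOn ℂ P (ball 0 1))
    (hre : ∀ w ∈ ball (0 : ℂ) 1, 0 < (P w).re) {z : ℂ} (hz : z ∈ ball 0 1) :
    ‖z * logDeriv P z‖ ≤ 2 * ‖z‖ / (1 - ‖z‖ ^ 2) := by
  have hz1 : ‖z‖ < 1 := mem_ball_zero_iff.mp hz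
  have hr2 : 0 < 1 - ‖z‖ ^ 2 := by nlinarith [norm_nonneg z]
  have hPz : 0 < ‖P z‖ := (hre z hz).trans_le (re_le_norm _)
  rw [logDeriv_apply, norm_mul, norm_div, le_div_iff₀ hr2]
  calc ‖z‖ * (‖deriv P z‖ / ‖P z‖) * (1 - ‖z‖ ^ 2)
      = ‖z‖ / ‖P z‖ * (‖deriv P z‖ * (1 - ‖z‖ ^ 2)) := by ring
    _ ≤ ‖z‖ / ‖P z‖ * (2 * ‖P z‖) := by
      gcongr ‖z‖ / ‖P z‖ * ?_
      linarith [norm_deriv_mul_le_of_re_pos hP hre hz, re_le_norm (P z)]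
    _ = 2 * ‖z‖ := by field_simp

theorem norm_mul_logDeriv_le_of_mapsTo_ball_one {q : ℂ → ℂ} (hq : DifferentiableOn ℂ q (ball 0 1))
    (hm : MapsTo q (ball 0 1) (ball 1 1)) (hq0 : q 0 = 1) {z : ℂ} (hz : z ∈ ball 0 1) :
    ‖z * logDeriv q z‖ ≤ ‖z‖ / (1 - ‖z‖) := by
  have hz1 : ‖z‖ < 1 := mem_ball_zero_iff.mp hz
  have hω : DifferentiableOn ℂ (fun w => q w - 1) (ball 0 1) := hq.sub_const 1
  have hωm : MapsTo (fun w => q w - 1) (ball 0 1) (ball 0 1) := fun w hw => by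
    simpa [mem_ball_zero_iff, ← dist_eq_norm] using hm hw
  have hschwarz : ‖q z - 1‖ ≤ ‖z‖ :=
    Complex.norm_le_norm_of_mapsTo_ball hω (hωm.mono_right ball_subset_closedBall)
      (by simp [hq0]) hz1
  have hpick := norm_deriv_mul_le_of_mapsTo_ball hω hωm hz
  rw [deriv_sub_const] at hpick
  have hqz : 1 - ‖q z - 1‖ ≤ ‖q z‖ := by
    linarith [norm_sub_norm_le (1 : ℂ) (q z), norm_sub_rev (1 : ℂ) (q z), norm_one (α := ℂ)]
  set t := ‖q z - 1‖
  have ht : 0 < 1 - t := by linarith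
  have hr2 : 0 < 1 - ‖z‖ ^ 2 := by nlinarith [norm_nonneg z]
  rw [logDeriv_apply, norm_mul, norm_div, le_div_iff₀ (by linarith)]
  calc ‖z‖ * (‖deriv q z‖ / ‖q z‖) * (1 - ‖z‖)
      ≤ ‖z‖ * (‖deriv q z‖ / (1 - t)) * (1 - ‖z‖) := by gcongr
    _ = ‖z‖ * (‖deriv q z‖ * (1 - ‖z‖ ^ 2)) / ((1 - t) * (1 + ‖z‖)) := by field_simp; ring
    _ ≤ ‖z‖ * (1 - t ^ 2) / ((1 - t) * (1 + ‖z‖)) := by gcongr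
    _ = ‖z‖ * ((1 + t) / (1 + ‖z‖)) := by field_simp; ring
    _ ≤ ‖z‖ * 1 := by gcongr; rw [div_le_one (by positivity)]; linarith
    _ = ‖z‖ := mul_one _

theorem mul_logDeriv_sub_one_eq {𝕜 : Type*} [NontriviallyNormedField 𝕜] {f P q : 𝕜 → 𝕜} {z : 𝕜}
    (hf : f =ᶠ[𝓝 z] fun w => w * (P w * q w)) (hz : z ≠ 0) (hP : P z ≠ 0) (hq : q z ≠ 0)
    (hPd : DifferentiableAt 𝕜 P z) (hqd : DifferentiableAt 𝕜 q z) :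
    z * logDeriv f z - 1 = z * logDeriv P z + z * logDeriv q z := by
  rw [(logDeriv_congr_nhds hf).eq_of_nhds,
    logDeriv_mul (f := fun w => w) (g := fun w => P w * q w) z hz (mul_ne_zero hP hq)
    differentiableAt_id (hPd.mul hqd), logDeriv_mul z hP hq hPd hqd, logDeriv_id']
  field_simp
  ring

lemma dslope_zero_eq_div {f : ℂ → ℂ} (hf0 : f 0 = 0) {w : ℂ} (hw : w ≠ 0) :
    dslope f 0 w = f w / w := by
  rw [dslope_of_ne f hw, slope_def_field, hf0, sub_zero, sub_zero]

lemma re_dslope_zero_pos {g : ℂ → ℂ} (hg0 : g 0 = 0) (hg0' : deriv g 0 = 1)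
    (hgz : ∀ z ∈ ball (0 : ℂ) 1, z ≠ 0 → 0 < (g z / z).re) :
    ∀ w ∈ ball (0 : ℂ) 1, 0 < (dslope g 0 w).re := by
  intro w hw
  rcases eq_or_ne w 0 with rfl | hw0
  · simp [hg0']
  · simpa [dslope_zero_eq_div hg0 hw0] using hgz w hw hw0

lemma mapsTo_dslope_div_dslope {f g : ℂ → ℂ} (hf0 : f 0 = 0) (hg0 : g 0 = 0)
    (hf0' : deriv f 0 = 1) (hg0' : deriv g 0 = 1)
    (hfg : ∀ z ∈ ball (0 : ℂ) 1, z ≠ 0 → ‖f z / g z - 1‖ < 1) :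
    MapsTo (fun w => dslope f 0 w / dslope g 0 w) (ball 0 1) (ball 1 1) := by
  intro w hw
  rcases eq_or_ne w 0 with rfl | hw0
  · simp [hf0', hg0']
  · have hw' : dslope f 0 w / dslope g 0 w = f w / g w := by
      rw [dslope_zero_eq_div hf0 hw0, dslope_zero_eq_div hg0 hw0,
        div_div_div_cancel_right₀ hw0]
    simpa [hw', dist_eq_norm] using hfg w hw hw0

theorem F3_log_deriv_bound_general
    (f g : ℂ → ℂ)
    (hf : DifferentiableOn ℂ f (ball (0 : ℂ) 1))
    (hg : DifferentiableOn ℂ g (ball (0 : ℂ) 1))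
    (hf0 : f 0 = 0) (hg0 : g 0 = 0)
    (hf0' : deriv f 0 = 1) (hg0' : deriv g 0 = 1)
    (hfg : ∀ z ∈ ball (0 : ℂ) 1, z ≠ 0 → ‖f z / g z - 1‖ < 1)
    (hgz : ∀ z ∈ ball (0 : ℂ) 1, z ≠ 0 → 0 < (g z / z).re)
    (z : ℂ) (hzball : z ∈ ball (0 : ℂ) 1) (hz0 : z ≠ 0)
    (r : ℝ) (hr : ‖z‖ = r) :
    ‖z * deriv f z / f z - 1‖ ≤ r * (3 + r) / (1 - r ^ 2) := by
  subst hr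
  have hball : ball (0 : ℂ) 1 ∈ 𝓝 0 := ball_mem_nhds 0 one_pos
  set P := dslope g 0
  set q : ℂ → ℂ := fun w => dslope f 0 w / P w
  have hP : DifferentiableOn ℂ P (ball 0 1) := (Complex.differentiableOn_dslope hball).mpr hg
  have hPre : ∀ w ∈ ball (0 : ℂ) 1, 0 < (P w).re := re_dslope_zero_pos hg0 hg0' hgz
  have hPne : ∀ w ∈ ball (0 : ℂ) 1, P w ≠ 0 := fun w hw h => by simpa [h] using hPre w hw
  have hq : DifferentiableOn ℂ q (ball 0 1) :=
    ((Complex.differentiableOn_dslope hball).mpr hf).div hP hPne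
  have hqm : MapsTo q (ball 0 1) (ball 1 1) := mapsTo_dslope_div_dslope hf0 hg0 hf0' hg0' hfg
  have hfPq : f =ᶠ[𝓝 z] fun w => w * (P w * q w) := by
    filter_upwards [isOpen_ball.mem_nhds hzball] with w hw
    rcases eq_or_ne w 0 with rfl | hw0
    · simp [hf0]
    · simp only [q, dslope_zero_eq_div hf0 hw0]
      field_simp [hPne w hw]
  have hqz : q z ≠ 0 := fun h => by simpa [h, dist_eq_norm] using hqm hzball
  rw [mul_div_assoc, ← logDeriv_apply, mul_logDeriv_sub_one_eq hfPq hz0 (hPne z hzball) hqz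
    (hP.differentiableAt (isOpen_ball.mem_nhds hzball))
    (hq.differentiableAt (isOpen_ball.mem_nhds hzball))]
  have hz1 : ‖z‖ < 1 := mem_ball_zero_iff.mp hzball
  calc ‖z * logDeriv P z + z * logDeriv q z‖
      ≤ ‖z * logDeriv P z‖ + ‖z * logDeriv q z‖ := norm_add_le _ _
    _ ≤ 2 * ‖z‖ / (1 - ‖z‖ ^ 2) + ‖z‖ / (1 - ‖z‖) :=
      add_le_add (norm_mul_logDeriv_le_of_re_pos hP hPre hzball)
        (norm_mul_logDeriv_le_of_mapsTo_ball_one hq hqm (by simp [q, P, hf0', hg0']) hzball)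
    _ = ‖z‖ * (3 + ‖z‖) / (1 - ‖z‖ ^ 2) := by
      have : 1 - ‖z‖ ^ 2 ≠ 0 := by nlinarith [norm_nonneg z]
      have : 1 - ‖z‖ ≠ 0 := by linarith
      field_simp
      ring

theorem F3_log_deriv_bound
    (f g : ℂ → ℂ)
    (hf : DifferentiableOn ℂ f (ball (0 : ℂ) 1))
    (hg : DifferentiableOn ℂ g (ball (0 : ℂ) 1))
    (hf0 : f 0 = 0) (hg0 : g 0 = 0)
    (hf0' : deriv f 0 = 1) (hg0' : deriv g 0 = 1)
    (hfne : ∀ z ∈ ball (0 : ℂ) 1, z ≠ 0 → f z ≠ 0)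
    (hgne : ∀ z ∈ ball (0 : ℂ) 1, z ≠ 0 → g z ≠ 0)
    (hfg : ∀ z ∈ ball (0 : ℂ) 1, z ≠ 0 → ‖f z / g z - 1‖ < 1)
    (hgz : ∀ z ∈ ball (0 : ℂ) 1, z ≠ 0 → 0 < (g z / z).re)
    (z : ℂ) (hzball : z ∈ ball (0 : ℂ) 1) (hz0 : z ≠ 0)
    (r : ℝ) (hr : ‖z‖ = r) :
    ‖z * deriv f z / f z - 1‖ ≤ r * (3 + r) / (1 - r ^ 2) :=
  F3_log_deriv_bound_general f g hf hg hf0 hg0 hf0' hg0' hfg hgz z hzball hz0 r hr
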